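/- arXiv:1803.04673 — 2 statements merged into one kernel-verified Lean document; each statement's English description precedes it below -/
import Mathlib

section
/- Assume U is nonempty and there exists x̄ ∈ X with p(x̄) ∈ ℝ (i.e., dom p ≠ ∅). The following statements are equivalent: (i) stable robust duality holds, i.e., p*(x*) = q(x*) for all x* ∈ X*; (ii) ∂^ε p(x) = C^ε(x) for all ε ≥ 0 and all x ∈ X; (iii) there exists ε̄ > 0 such that ∂^ε p(x) = C^ε(x) for all ε ∈ (0, ε̄) and all x ∈ X. -/
/-!
`∂^ε p(x)` and `C^ε(x)` are both cut out by an `ε`-Fenchel–Young inequality at `x`: for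
`p(x) ∈ ℝ`, `x* ∈ ∂^ε p(x) ↔ p*(x*) ≤ ⟨x*, x⟩ - p(x) + ε`, and, after choosing `(u, y*)` nearly
optimal in `q(x*)` and splitting the slack as `ε₁ = p(x) - F_u(x, 0)`,
`x* ∈ C^ε(x) ↔ q(x*) ≤ ⟨x*, x⟩ - p(x) + ε`. Since `p* ≤ q` always, stable duality makes the
two sets equal. Conversely, if `p*(x*)` is finite (it is `> -∞` because `dom p ≠ ∅`), every
`ε > 0` admits an `ε`-maximizer `x` of `x* - p`, i.e. `x* ∈ ∂^ε p(x) = C^ε(x)`, whence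
`q(x*) ≤ p*(x*) + ε`.
-/

noncomputable section

namespace RobustDuality

/-- The set of `ε`-minimizers of an extended-real-valued function `h`:
`{z | h z ∈ ℝ ∧ h z ≤ inf h + ε}` (empty when `inf h ∉ ℝ`). -/
def epsArgmin {Z : Type*} (h : Z → EReal) (ε : ℝ) : Set Z :=
  {z | (∃ r : ℝ, h z = (r : EReal)) ∧ h z ≤ (⨅ w, h w) + (ε : EReal)}

variable {X : Type*} [AddCommGroup X] [Module ℝ X] [TopologicalSpace X]
  [IsTopologicalAddGroup X] [ContinuousSMul ℝ X] [LocallyConvexSpace ℝ X] [T2Space X]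

/-- `(M^ε h)(x*) := ε-argmin (h - x*)` for `h : X → EReal` and `x* ∈ X*`. -/
def M1 (h : X → EReal) (ε : ℝ) (xs : X →L[ℝ] ℝ) : Set X :=
  epsArgmin (fun x => h x - ((xs x : ℝ) : EReal)) ε

/-- Fenchel conjugate of `h : X → EReal`. -/
def conj1 (h : X → EReal) (xs : X →L[ℝ] ℝ) : EReal :=
  ⨆ x : X, ((xs x : ℝ) : EReal) - h x

/-- `ε`-subdifferential of `h : X → EReal` at `a`. -/
def epsSubdiff1 (h : X → EReal) (ε : ℝ) (a : X) : Set (X →L[ℝ] ℝ) :=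
  {xs | (∃ r : ℝ, h a = (r : EReal)) ∧
    ∀ x, h a + ((xs x - xs a - ε : ℝ) : EReal) ≤ h x}

section Pair

variable {Yu : Type*} [AddCommGroup Yu] [Module ℝ Yu] [TopologicalSpace Yu]
  [IsTopologicalAddGroup Yu] [ContinuousSMul ℝ Yu] [LocallyConvexSpace ℝ Yu] [T2Space Yu]

/-- Fenchel conjugate of `F : X × Y → EReal` at `(x*, y*)`. -/
def conj2 (F : X × Yu → EReal) (xs : X →L[ℝ] ℝ) (ys : Yu →L[ℝ] ℝ) : EReal :=
  ⨆ z : X × Yu, ((xs z.1 + ys z.2 : ℝ) : EReal) - F z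

/-- `(M^ε F)(x*, y*) := ε-argmin (F - (x*, y*))`. -/
def M2 (F : X × Yu → EReal) (ε : ℝ) (xs : X →L[ℝ] ℝ) (ys : Yu →L[ℝ] ℝ) : Set (X × Yu) :=
  epsArgmin (fun z => F z - ((xs z.1 + ys z.2 : ℝ) : EReal)) ε

/-- `ε`-subdifferential of `F : X × Y → EReal` at `a`, as a set of dual pairs. -/
def epsSubdiff2 (F : X × Yu → EReal) (ε : ℝ) (a : X × Yu) :
    Set ((X →L[ℝ] ℝ) × (Yu →L[ℝ] ℝ)) :=
  {zs | (∃ r : ℝ, F a = (r : EReal)) ∧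
    ∀ z, F a + ((zs.1 z.1 + zs.2 z.2 - zs.1 a.1 - zs.2 a.2 - ε : ℝ) : EReal) ≤ F z}

end Pair

variable {U : Type*} {Y : U → Type*} [∀ u, AddCommGroup (Y u)] [∀ u, Module ℝ (Y u)]
  [∀ u, TopologicalSpace (Y u)] [∀ u, IsTopologicalAddGroup (Y u)]
  [∀ u, ContinuousSMul ℝ (Y u)] [∀ u, LocallyConvexSpace ℝ (Y u)] [∀ u, T2Space (Y u)]

/-- The robust objective `p := sup_{u ∈ U} F_u (·, 0_u)`. -/
def pRob (F : ∀ u, X × Y u → EReal) (x : X) : EReal := ⨆ u, F u (x, 0)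

/-- `q := inf over u ∈ U and y* ∈ Y_u* of F_u*(·, y*)`. -/
def qRob (F : ∀ u, X × Y u → EReal) (xs : X →L[ℝ] ℝ) : EReal :=
  ⨅ (u : U) (ys : Y u →L[ℝ] ℝ), conj2 (F u) xs ys

/-- `S^ε(x*) := {x : p x ∈ ℝ ∧ p x - ⟨x*, x⟩ ≤ -q x* + ε}`. -/
def Sset (F : ∀ u, X × Y u → EReal) (ε : ℝ) (xs : X →L[ℝ] ℝ) : Set X :=
  {x | (∃ r : ℝ, pRob F x = (r : EReal)) ∧
    pRob F x - ((xs x : ℝ) : EReal) ≤ -qRob F xs + (ε : EReal)}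

/-- `J^ε(u) := {x : p x ∈ ℝ ∧ p x ≤ F_u(x, 0) + ε}`. -/
def Jset (F : ∀ u, X × Y u → EReal) (ε : ℝ) (u : U) : Set X :=
  {x | (∃ r : ℝ, pRob F x = (r : EReal)) ∧ pRob F x ≤ F u (x, 0) + (ε : EReal)}

/-- `A^{(ε₁,ε₂)}_{(u,y*)}(x*) := {x ∈ J^{ε₁}(u) : (x, 0) ∈ (M^{ε₂}F_u)(x*, y*)}`. -/
def Aset (F : ∀ u, X × Y u → EReal) (ε₁ ε₂ : ℝ) (u : U) (ys : Y u →L[ℝ] ℝ)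
    (xs : X →L[ℝ] ℝ) : Set X :=
  {x | x ∈ Jset F ε₁ u ∧ (x, (0 : Y u)) ∈ M2 (F u) ε₂ xs ys}

/-- `𝒜^ε(x*)`. -/
def calA (F : ∀ u, X × Y u → EReal) (ε : ℝ) (xs : X →L[ℝ] ℝ) : Set X :=
  ⋂ (η : ℝ) (_ : 0 < η),
    ⋃ (u : U) (ys : Y u →L[ℝ] ℝ) (ε₁ : ℝ) (ε₂ : ℝ)
      (_ : 0 ≤ ε₁) (_ : 0 ≤ ε₂) (_ : ε₁ + ε₂ = ε + η), Aset F ε₁ ε₂ u ys xs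

/-- `B^ε_{(u,y*)}(x*)`. -/
def Bset (F : ∀ u, X × Y u → EReal) (ε : ℝ) (u : U) (ys : Y u →L[ℝ] ℝ)
    (xs : X →L[ℝ] ℝ) : Set X :=
  ⋃ (ε₁ : ℝ) (ε₂ : ℝ) (_ : 0 ≤ ε₁) (_ : 0 ≤ ε₂) (_ : ε₁ + ε₂ = ε),
    Aset F ε₁ ε₂ u ys xs

/-- `B^ε(x*) := ⋃_{u, y*} B^ε_{(u,y*)}(x*)`. -/
def BsetAll (F : ∀ u, X × Y u → EReal) (ε : ℝ) (xs : X →L[ℝ] ℝ) : Set X :=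
  ⋃ (u : U) (ys : Y u →L[ℝ] ℝ), Bset F ε u ys xs

/-- `I^ε(x)`: the set of `ε`-active indices at `x`. -/
def Iset (F : ∀ u, X × Y u → EReal) (ε : ℝ) (x : X) : Set U :=
  {u | (∃ r : ℝ, pRob F x = (r : EReal)) ∧ pRob F x - (ε : EReal) ≤ F u (x, 0)}

/-- `C^ε(x)`. -/
def Cset (F : ∀ u, X × Y u → EReal) (ε : ℝ) (x : X) : Set (X →L[ℝ] ℝ) :=
  ⋂ (η : ℝ) (_ : 0 < η),
    ⋃ (ε₁ : ℝ) (ε₂ : ℝ) (_ : 0 ≤ ε₁) (_ : 0 ≤ ε₂) (_ : ε₁ + ε₂ = ε + η)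
      (u : U) (_ : u ∈ Iset F ε₁ x),
      Prod.fst '' epsSubdiff2 (F u) ε₂ (x, (0 : Y u))

/-- `D^ε(x)`. -/
def Dset (F : ∀ u, X × Y u → EReal) (ε : ℝ) (x : X) : Set (X →L[ℝ] ℝ) :=
  ⋃ (ε₁ : ℝ) (ε₂ : ℝ) (_ : 0 ≤ ε₁) (_ : 0 ≤ ε₂) (_ : ε₁ + ε₂ = ε)
    (u : U) (_ : u ∈ Iset F ε₁ x),
    Prod.fst '' epsSubdiff2 (F u) ε₂ (x, (0 : Y u))

/-- The exact active index set `I(x) := {u : F_u(x,0) = p(x)}` (when `p(x) ∈ ℝ`). -/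
def I0set (F : ∀ u, X × Y u → EReal) (x : X) : Set U :=
  {u | (∃ r : ℝ, pRob F x = (r : EReal)) ∧ F u (x, 0) = pRob F x}

/-- `D(x) := ⋃_{u ∈ I(x)} proj_{X*} ∂F_u(x, 0)`. -/
def D0set (F : ∀ u, X × Y u → EReal) (x : X) : Set (X →L[ℝ] ℝ) :=
  ⋃ (u : U) (_ : u ∈ I0set F x), Prod.fst '' epsSubdiff2 (F u) 0 (x, (0 : Y u))

/-- `B_{(u,y*)}(x*) := {x ∈ J(u) : (x, 0) ∈ (M F_u)(x*, y*)}`. -/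
def B0set (F : ∀ u, X × Y u → EReal) (u : U) (ys : Y u →L[ℝ] ℝ)
    (xs : X →L[ℝ] ℝ) : Set X :=
  {x | (∃ r : ℝ, pRob F x = (r : EReal)) ∧ F u (x, 0) = pRob F x ∧
    (x, (0 : Y u)) ∈ M2 (F u) 0 xs ys}

lemma coe_sub_le_coe_iff (h : EReal) (a b : ℝ) :
    (a : EReal) - h ≤ b ↔ ((a - b : ℝ) : EReal) ≤ h := by
  induction h using EReal.rec with
  | bot => exact iff_of_false (by simp) (EReal.coe_ne_bot _ ∘ le_bot_iff.mp)
  | top => simp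
  | coe s =>
    rw [← EReal.coe_sub, EReal.coe_le_coe_iff, EReal.coe_le_coe_iff]
    constructor <;> intro <;> linarith

lemma exists_eq_coe_of_coe_le_of_le_coe {a : EReal} {b c : ℝ} (hb : (b : EReal) ≤ a)
    (hc : a ≤ c) : ∃ s : ℝ, a = s := by
  induction a using EReal.rec with
  | bot => simp at hb
  | top => simp at hc
  | coe s => exact ⟨s, rfl⟩

lemma iSup_coe_sub_le_coe_iff {Z : Type*} (f : Z → ℝ) (h : Z → EReal) (c : ℝ) :
    (⨆ z, (f z : EReal) - h z) ≤ c ↔ ∀ z, ((f z - c : ℝ) : EReal) ≤ h z := by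
  simp only [iSup_le_iff, coe_sub_le_coe_iff]

section Conjugate

variable {E V : Type*} [AddCommGroup E] [Module ℝ E] [TopologicalSpace E]
  [AddCommGroup V] [Module ℝ V] [TopologicalSpace V]

lemma coe_sub_le_conj1 {h : E → EReal} {a : E} {r : ℝ} (hr : h a = r) (xs : E →L[ℝ] ℝ) :
    ((xs a - r : ℝ) : EReal) ≤ conj1 h xs := by
  calc ((xs a - r : ℝ) : EReal) = (xs a : EReal) - h a := by rw [hr, EReal.coe_sub]
    _ ≤ conj1 h xs := le_iSup (fun x => ((xs x : ℝ) : EReal) - h x) a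

lemma mem_epsSubdiff1_iff {h : E → EReal} {ε : ℝ} {a : E} {xs : E →L[ℝ] ℝ} :
    xs ∈ epsSubdiff1 h ε a ↔ ∃ r : ℝ, h a = r ∧ conj1 h xs ≤ ((xs a - r + ε : ℝ) : EReal) := by
  refine ⟨fun ⟨⟨r, hr⟩, hle⟩ => ⟨r, hr, ?_⟩, fun ⟨r, hr, hle⟩ => ⟨⟨r, hr⟩, fun x => ?_⟩⟩
  · refine (iSup_coe_sub_le_coe_iff _ _ _).2 fun x => ?_
    convert hle x using 1
    rw [hr, ← EReal.coe_add]
    ring_nf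
  · convert (iSup_coe_sub_le_coe_iff _ _ _).1 hle x using 1
    rw [hr, ← EReal.coe_add]
    ring_nf

lemma mem_epsSubdiff2_iff {G : E × V → EReal} {ε : ℝ} {a : E × V}
    {zs : (E →L[ℝ] ℝ) × (V →L[ℝ] ℝ)} :
    zs ∈ epsSubdiff2 G ε a ↔
      ∃ r : ℝ, G a = r ∧ conj2 G zs.1 zs.2 ≤ ((zs.1 a.1 + zs.2 a.2 - r + ε : ℝ) : EReal) := by
  refine ⟨fun ⟨⟨r, hr⟩, hle⟩ => ⟨r, hr, ?_⟩, fun ⟨r, hr, hle⟩ => ⟨⟨r, hr⟩, fun z => ?_⟩⟩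
  · refine (iSup_coe_sub_le_coe_iff _ _ _).2 fun z => ?_
    convert hle z using 1
    rw [hr, ← EReal.coe_add]
    ring_nf
  · convert (iSup_coe_sub_le_coe_iff _ _ _).1 hle z using 1
    rw [hr, ← EReal.coe_add]
    ring_nf

lemma exists_mem_epsSubdiff1_of_conj1_eq_coe {h : E → EReal} {xs : E →L[ℝ] ℝ} {c : ℝ}
    (hc : conj1 h xs = c) {ε : ℝ} (hε : 0 < ε) : ∃ a, xs ∈ epsSubdiff1 h ε a := by
  have hlt : ¬ conj1 h xs ≤ ((c - ε : ℝ) : EReal) := by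
    rw [hc, EReal.coe_le_coe_iff]
    linarith
  obtain ⟨a, ha⟩ : ∃ a, h a < ((xs a - (c - ε) : ℝ) : EReal) := by
    simpa only [conj1, iSup_coe_sub_le_coe_iff, not_forall, not_le] using hlt
  have hlow := (iSup_coe_sub_le_coe_iff _ _ _).1 hc.le a
  obtain ⟨r, hr⟩ := exists_eq_coe_of_coe_le_of_le_coe hlow ha.le
  rw [hr, EReal.coe_lt_coe_iff] at ha
  exact ⟨a, mem_epsSubdiff1_iff.2 ⟨r, hr, hc ▸ EReal.coe_le_coe_iff.2 (by linarith)⟩⟩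

end Conjugate

section Robust

variable {E : Type*} [AddCommGroup E] [Module ℝ E] [TopologicalSpace E]
  {ι : Type*} {V : ι → Type*} [∀ i, AddCommGroup (V i)] [∀ i, Module ℝ (V i)]
  [∀ i, TopologicalSpace (V i)]

lemma conj1_pRob_le_qRob (F : ∀ i, E × V i → EReal) (xs : E →L[ℝ] ℝ) :
    conj1 (pRob F) xs ≤ qRob F xs := by
  refine le_iInf₂ fun i ys => iSup_le fun x => ?_
  calc ((xs x : ℝ) : EReal) - pRob F x
      ≤ ((xs x + ys 0 : ℝ) : EReal) - F i (x, 0) := by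
        rw [map_zero, add_zero]
        exact EReal.sub_le_sub le_rfl (le_iSup (fun i => F i (x, 0)) i)
    _ ≤ conj2 (F i) xs ys :=
        le_iSup (fun z : E × V i => ((xs z.1 + ys z.2 : ℝ) : EReal) - F i z) (x, 0)

lemma qRob_le_conj2 (F : ∀ i, E × V i → EReal) (xs : E →L[ℝ] ℝ) (i : ι) (ys : V i →L[ℝ] ℝ) :
    qRob F xs ≤ conj2 (F i) xs ys :=
  iInf₂_le (f := fun i ys => conj2 (F i) xs ys) i ys

lemma mem_Cset_iff {F : ∀ i, E × V i → EReal} {ε : ℝ} {x : E} {xs : E →L[ℝ] ℝ} :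
    xs ∈ Cset F ε x ↔
      ∃ r : ℝ, pRob F x = r ∧ qRob F xs ≤ ((xs x - r + ε : ℝ) : EReal) := by
  simp only [Cset, Set.mem_iInter, Set.mem_iUnion]
  constructor
  · intro hC
    obtain ⟨-, -, -, -, -, -, ⟨⟨r, hr⟩, -⟩, -⟩ := hC 1 one_pos
    refine ⟨r, hr, EReal.le_of_forall_lt_iff_le.1 fun z hz => ?_⟩
    rw [EReal.coe_lt_coe_iff] at hz
    obtain ⟨ε₁, ε₂, -, -, hsum, i, ⟨-, hi⟩, ⟨xs', ys⟩, hmem, hxs'⟩ :=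
      hC (z - (xs x - r + ε)) (by linarith)
    replace hxs' : xs = xs' := hxs'.symm
    subst hxs'
    obtain ⟨s, hs, hconj⟩ := mem_epsSubdiff2_iff.1 hmem
    rw [hr, hs, ← EReal.coe_sub, EReal.coe_le_coe_iff] at hi
    rw [map_zero, add_zero] at hconj
    calc qRob F xs ≤ conj2 (F i) xs ys := qRob_le_conj2 F xs i ys
      _ ≤ ((xs x - s + ε₂ : ℝ) : EReal) := hconj
      _ ≤ z := EReal.coe_le_coe_iff.2 (by linarith)
  · rintro ⟨r, hr, hq⟩ η hη
    obtain ⟨i, ys, hconj⟩ : ∃ i ys, conj2 (F i) xs ys < ((xs x - r + ε + η : ℝ) : EReal) := by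
      simpa only [qRob, iInf_lt_iff] using hq.trans_lt (EReal.coe_lt_coe_iff.2 (by linarith))
    have hlow := (iSup_coe_sub_le_coe_iff _ _ _).1 hconj.le (x, 0)
    have hup : F i (x, 0) ≤ r := hr ▸ le_iSup (fun i => F i (x, 0)) i
    obtain ⟨s, hs⟩ := exists_eq_coe_of_coe_le_of_le_coe hlow hup
    rw [hs, EReal.coe_le_coe_iff] at hlow hup
    simp only [map_zero] at hlow
    refine ⟨r - s, ε + η - (r - s), by linarith, by linarith, by ring, i, ⟨⟨r, hr⟩, ?_⟩,
      (xs, ys), mem_epsSubdiff2_iff.2 ⟨s, hs, hconj.le.trans (EReal.coe_le_coe_iff.2 ?_)⟩, rfl⟩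
    · rw [hr, hs, ← EReal.coe_sub, sub_sub_cancel]
    · simp only [map_zero]
      linarith

lemma qRob_le_conj1_of_epsSubdiff1_subset_Cset {F : ∀ i, E × V i → EReal}
    (hdom : ∃ a, ∃ r : ℝ, pRob F a = r) {εbar : ℝ} (hεbar : 0 < εbar)
    (h : ∀ ε, 0 < ε → ε < εbar → ∀ x, epsSubdiff1 (pRob F) ε x ⊆ Cset F ε x)
    (xs : E →L[ℝ] ℝ) : qRob F xs ≤ conj1 (pRob F) xs := by
  obtain ⟨a, r₀, hr₀⟩ := hdom
  cases hc : conj1 (pRob F) xs using EReal.rec with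
  | bot => exact absurd hc (ne_bot_of_le_ne_bot (EReal.coe_ne_bot _) (coe_sub_le_conj1 hr₀ xs))
  | top => exact le_top
  | coe c =>
    refine EReal.le_of_forall_lt_iff_le.1 fun z hz => ?_
    rw [EReal.coe_lt_coe_iff] at hz
    have hε : 0 < min (z - c) (εbar / 2) := lt_min (by linarith) (by linarith)
    obtain ⟨x, hx⟩ := exists_mem_epsSubdiff1_of_conj1_eq_coe hc hε
    have hεbar' : min (z - c) (εbar / 2) < εbar := by linarith [min_le_right (z - c) (εbar / 2)]
    obtain ⟨r, hr, hq⟩ := mem_Cset_iff.1 (h _ hε hεbar' x hx)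
    have hxr := coe_sub_le_conj1 hr xs
    rw [hc, EReal.coe_le_coe_iff] at hxr
    exact hq.trans (EReal.coe_le_coe_iff.2 (by linarith [min_le_left (z - c) (εbar / 2)]))

end Robust

theorem stable_robust_duality_iff_general
    (F : ∀ u, X × Y u → EReal)
    (hdomp : ∃ xbar : X, ∃ r : ℝ, pRob F xbar = (r : EReal)) :
    List.TFAE
      [∀ xs : X →L[ℝ] ℝ, conj1 (pRob F) xs = qRob F xs,
       ∀ ε : ℝ, 0 ≤ ε → ∀ x : X, epsSubdiff1 (pRob F) ε x = Cset F ε x,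
       ∃ εbar : ℝ, 0 < εbar ∧ ∀ ε : ℝ, 0 < ε → ε < εbar → ∀ x : X,
         epsSubdiff1 (pRob F) ε x = Cset F ε x] := by
  tfae_have 1 → 2
  | hpq, ε, _, x => by
    ext xs
    simp only [mem_epsSubdiff1_iff, mem_Cset_iff, hpq]
  tfae_have 2 → 3
  | h => ⟨1, one_pos, fun ε hε _ x => h ε hε.le x⟩
  tfae_have 3 → 1
  | ⟨εbar, hεbar, h⟩, xs =>
    le_antisymm (conj1_pRob_le_qRob F xs) <|
      qRob_le_conj1_of_epsSubdiff1_subset_Cset hdomp hεbar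
        (fun ε hε hεε x => (h ε hε hεε x).le) xs
  tfae_finish

/-- Theorem 6.1 (stable robust duality). -/
theorem stable_robust_duality_iff
    (F : ∀ u, X × Y u → EReal) (hU : Nonempty U) (hF : ∀ u z, F u z ≠ ⊥)
    (hdomp : ∃ xbar : X, ∃ r : ℝ, pRob F xbar = (r : EReal)) :
    List.TFAE
      [∀ xs : X →L[ℝ] ℝ, conj1 (pRob F) xs = qRob F xs,
       ∀ ε : ℝ, 0 ≤ ε → ∀ x : X, epsSubdiff1 (pRob F) ε x = Cset F ε x,
       ∃ εbar : ℝ, 0 < εbar ∧ ∀ ε : ℝ, 0 < ε → ε < εbar → ∀ x : X,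
         epsSubdiff1 (pRob F) ε x = Cset F ε x] :=
  stable_robust_duality_iff_general F hdomp

end RobustDuality
end
end

section
/- For every x ∈ X one has D(x) ⊆ C(x) ⊆ ∂p(x), where ∂p(x) := ∂⁰p(x) is the (exact) subdifferential of p at x, D(x) := ⋃_{u∈I(x)} proj^u_{X*} ∂F_u(x, 0_u), C(x) := ⋂_{η>0} ⋃_{ε₁,ε₂≥0, ε₁+ε₂=η} ⋃_{u∈I^{ε₁}(x)} proj^u_{X*} ∂^{ε₂}F_u(x, 0_u), and I(x) := I⁰(x) = {u ∈ U : F_u(x, 0_u) = p(x)} when p(x) ∈ ℝ (∅ otherwise). -/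
/-!
If `u` is `ε₁`-active at `x` and `(x*, y*)` is an `ε₂`-subgradient of `F_u` at `(x, 0)`, then
`p ≥ F_u(·, 0) ≥ F_u(x, 0) + ⟨x*, · - x⟩ - ε₂ ≥ p(x) + ⟨x*, · - x⟩ - (ε₁ + ε₂)`, so `x*` is an
`(ε₁ + ε₂)`-subgradient of `p`. Elements of `C(x)` are such subgradients for every total slack
`η > 0`, hence exact subgradients; and an exact active index gives one for every `η`.
-/

noncomputable section

namespace RobustDuality

variable {X : Type*} [AddCommGroup X] [Module ℝ X] [TopologicalSpace X]
  [IsTopologicalAddGroup X] [ContinuousSMul ℝ X] [LocallyConvexSpace ℝ X] [T2Space X]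

variable {U : Type*} {Y : U → Type*} [∀ u, AddCommGroup (Y u)] [∀ u, Module ℝ (Y u)]
  [∀ u, TopologicalSpace (Y u)] [∀ u, IsTopologicalAddGroup (Y u)]
  [∀ u, ContinuousSMul ℝ (Y u)] [∀ u, LocallyConvexSpace ℝ (Y u)] [∀ u, T2Space (Y u)]

section

omit [IsTopologicalAddGroup X] [ContinuousSMul ℝ X] [LocallyConvexSpace ℝ X] [T2Space X]
  [∀ u, IsTopologicalAddGroup (Y u)] [∀ u, ContinuousSMul ℝ (Y u)]
  [∀ u, LocallyConvexSpace ℝ (Y u)] [∀ u, T2Space (Y u)]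

variable (F : ∀ u, X × Y u → EReal)

section

omit [AddCommGroup X] [Module ℝ X] [TopologicalSpace X] [∀ u, Module ℝ (Y u)]
  [∀ u, TopologicalSpace (Y u)]

theorem Iset_mono {ε ε' : ℝ} (h : ε ≤ ε') (x : X) : Iset F ε x ⊆ Iset F ε' x :=
  fun _ ⟨hp, hu⟩ => ⟨hp, (EReal.sub_le_sub le_rfl (EReal.coe_le_coe_iff.mpr h)).trans hu⟩

theorem I0set_subset_Iset_zero (x : X) : I0set F x ⊆ Iset F 0 x := by
  rintro u ⟨hp, hu⟩
  exact ⟨hp, by rw [EReal.coe_zero, sub_zero, hu]⟩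

end

theorem D0set_subset_Dset_zero (x : X) : D0set F x ⊆ Dset F 0 x := by
  intro xs hxs
  simp only [D0set, Dset, Set.mem_iUnion] at hxs ⊢
  obtain ⟨u, hu, hxs⟩ := hxs
  exact ⟨0, 0, le_rfl, le_rfl, add_zero 0, u, I0set_subset_Iset_zero F x hu, hxs⟩

theorem Dset_subset_Cset (ε : ℝ) (x : X) : Dset F ε x ⊆ Cset F ε x := by
  intro xs hxs
  simp only [Dset, Cset, Set.mem_iInter, Set.mem_iUnion] at hxs ⊢
  obtain ⟨ε₁, ε₂, hε₁, hε₂, hsum, u, hu, hxs⟩ := hxs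
  intro η hη
  exact ⟨ε₁ + η, ε₂, by positivity, hε₂, by rw [← hsum]; ring, u,
    Iset_mono F (le_add_of_nonneg_right hη.le) x hu, hxs⟩

theorem mem_epsSubdiff1_of_forall_pos {h : X → EReal} {ε : ℝ} {a : X} {xs : X →L[ℝ] ℝ}
    (hxs : ∀ η > 0, xs ∈ epsSubdiff1 h (ε + η) a) : xs ∈ epsSubdiff1 h ε a := by
  obtain ⟨⟨r, hr⟩, -⟩ := hxs 1 one_pos
  refine ⟨⟨r, hr⟩, fun w => ?_⟩
  rw [hr, ← EReal.coe_add, ← EReal.ge_of_forall_gt_iff_ge]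
  intro z hz
  have hη : 0 < r + (xs w - xs a - ε) - z := sub_pos.mpr (EReal.coe_lt_coe_iff.mp hz)
  have hw := (hxs _ hη).2 w
  rw [hr, ← EReal.coe_add] at hw
  convert hw using 2
  ring

theorem fst_mem_epsSubdiff1_pRob {ε₁ ε₂ : ℝ} {x : X} {u : U} (hu : u ∈ Iset F ε₁ x)
    {zs : (X →L[ℝ] ℝ) × (Y u →L[ℝ] ℝ)} (hzs : zs ∈ epsSubdiff2 (F u) ε₂ (x, 0)) :
    zs.1 ∈ epsSubdiff1 (pRob F) (ε₁ + ε₂) x := by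
  obtain ⟨⟨r, hr⟩, hu⟩ := hu
  obtain ⟨⟨s, hs⟩, hsub⟩ := hzs
  have hrs : r - ε₁ ≤ s := by
    rw [hr, hs] at hu
    exact_mod_cast hu
  refine ⟨⟨r, hr⟩, fun w => ?_⟩
  have hw := hsub (w, 0)
  rw [hs, ← EReal.coe_add] at hw
  calc pRob F x + ((zs.1 w - zs.1 x - (ε₁ + ε₂) : ℝ) : EReal)
      ≤ ((s + (zs.1 w + zs.2 0 - zs.1 x - zs.2 0 - ε₂) : ℝ) : EReal) := by
        rw [hr, ← EReal.coe_add, EReal.coe_le_coe_iff]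
        linarith
    _ ≤ F u (w, 0) := hw
    _ ≤ pRob F w := le_iSup (fun v => F v (w, 0)) u

theorem Cset_subset_epsSubdiff1 (ε : ℝ) (x : X) : Cset F ε x ⊆ epsSubdiff1 (pRob F) ε x := by
  intro xs hxs
  refine mem_epsSubdiff1_of_forall_pos fun η hη => ?_
  simp only [Cset, Set.mem_iInter, Set.mem_iUnion] at hxs
  obtain ⟨ε₁, ε₂, -, -, hsum, u, hu, zs, hzs, rfl⟩ := hxs η hη
  exact hsum ▸ fst_mem_epsSubdiff1_pRob F hu hzs

end

theorem D0set_subset_Cset_subset_subdiff_general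
    (F : ∀ u, X × Y u → EReal) (x : X) :
    D0set F x ⊆ Cset F 0 x ∧ Cset F 0 x ⊆ epsSubdiff1 (pRob F) 0 x :=
  ⟨(D0set_subset_Dset_zero F x).trans (Dset_subset_Cset F 0 x), Cset_subset_epsSubdiff1 F 0 x⟩

/-- Lemma 8.1: `D(x) ⊆ C(x) ⊆ ∂p(x)`. -/
theorem D0set_subset_Cset_subset_subdiff
    (F : ∀ u, X × Y u → EReal) (hU : Nonempty U) (hF : ∀ u z, F u z ≠ ⊥) (x : X) :
    D0set F x ⊆ Cset F 0 x ∧ Cset F 0 x ⊆ epsSubdiff1 (pRob F) 0 x :=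
  D0set_subset_Cset_subset_subdiff_general F x

end RobustDuality
end
end
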